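/- arXiv:2102.01248 — 4 statements merged into one kernel-verified Lean document; each statement's English description precedes it below -/
import Mathlib

section
/- Let σ_K(ξ) = 1 − ξ². There exists N₀ such that for all N ≥ N₀, with T = 1/(100N³), for all s, t with 0 ≤ s ≤ t ≤ T, and all ξ, ξ₁ ∈ ℝ with N/2 ≤ |ξ₁| ≤ 2N, N/2 ≤ |ξ − ξ₁| ≤ 2N, and 1/2 ≤ |ξ| ≤ 2, one has −sin(ξσ_K(ξ)(t−s))·sin(ξ₁σ_K(ξ₁)s)·cos((ξ−ξ₁)σ_K(ξ−ξ₁)s) + (1/2)·cos(ξσ_K(ξ)(t−s))·cos(ξ₁σ_K(ξ₁)s)·cos((ξ−ξ₁)σ_K(ξ−ξ₁)s) ≥ 1/32. -/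
/-
For N ≥ 1 and T = 1/(100N³), every frequency x with |x| ≤ 2N has phase |xσ_K(x)| ≤ 2N + 8N³ ≤ 10N³,
so all three phases in the expression are at most 1/10 on [0, T]. The expression is then a small
perturbation of (1/2)·cos·cos·cos ≈ 1/2: the sines contribute at most 1/100.
-/

noncomputable def sigmaK (ξ : ℝ) : ℝ := 1 - ξ ^ 2

open Real

lemma abs_mul_sigmaK_le {x M : ℝ} (hx : |x| ≤ M) : |x * sigmaK x| ≤ M + M ^ 3 :=
  calc |x * sigmaK x| = |x - x ^ 3| := by rw [sigmaK]; ring_nf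
    _ ≤ |x| + |x| ^ 3 := by rw [← abs_pow]; exact abs_sub _ _
    _ ≤ M + M ^ 3 := by gcongr

lemma abs_mul_sigmaK_mul_le {N x τ : ℝ} (hN : 1 ≤ N) (hx : |x| ≤ 2 * N) (hτ₀ : 0 ≤ τ)
    (hτ : τ ≤ 1 / (100 * N ^ 3)) : |x * sigmaK x * τ| ≤ 1 / 10 := by
  have hN₃ : 0 < N ^ 3 := by positivity
  calc |x * sigmaK x * τ| = |x * sigmaK x| * τ := by rw [abs_mul, abs_of_nonneg hτ₀]
    _ ≤ (2 * N + (2 * N) ^ 3) * (1 / (100 * N ^ 3)) := by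
        gcongr
        exact abs_mul_sigmaK_le hx
    _ ≤ 10 * N ^ 3 * (1 / (100 * N ^ 3)) := by gcongr; nlinarith [one_le_pow₀ (n := 2) hN]
    _ = 1 / 10 := by field_simp; norm_num

lemma cos_ge_of_abs_le_tenth {x : ℝ} (hx : |x| ≤ 1 / 10) : 199 / 200 ≤ cos x := by
  have hsq : x ^ 2 ≤ (1 / 10) ^ 2 := sq_le_sq' (abs_le.1 hx).1 (abs_le.1 hx).2
  linarith [one_sub_sq_div_two_le_cos (x := x)]

lemma trig_combination_ge {a b c : ℝ} (ha : |a| ≤ 1 / 10) (hb : |b| ≤ 1 / 10)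
    (hc : |c| ≤ 1 / 10) :
    1 / 32 ≤ -(sin a * sin b) * cos c + (1 / 2) * cos a * cos b * cos c := by
  have hca := cos_ge_of_abs_le_tenth ha
  have hcb := cos_ge_of_abs_le_tenth hb
  have hcc := cos_ge_of_abs_le_tenth hc
  have hsines : |sin a * sin b * cos c| ≤ 1 / 100 :=
    calc |sin a * sin b * cos c| = |sin a| * |sin b| * |cos c| := by rw [abs_mul, abs_mul]
      _ ≤ (1 / 10) * (1 / 10) * 1 := by
          gcongr
          exacts [abs_sin_le_abs.trans ha, abs_sin_le_abs.trans hb, abs_cos_le_one c]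
      _ = 1 / 100 := by norm_num
  have hcosines : 199 / 200 * (199 / 200) * (199 / 200) ≤ cos a * cos b * cos c := by gcongr
  have hsplit : -(sin a * sin b) * cos c + (1 / 2) * cos a * cos b * cos c
      = 1 / 2 * (cos a * cos b * cos c) - sin a * sin b * cos c := by ring
  rw [hsplit]
  linarith [(abs_le.1 hsines).2]

theorem stmt_2 :
    ∃ N₀ : ℝ, ∀ N : ℝ, N₀ ≤ N →
      ∀ s t : ℝ, 0 ≤ s → s ≤ t → t ≤ 1 / (100 * N ^ 3) →
      ∀ ξ ξ₁ : ℝ,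
        N / 2 ≤ |ξ₁| → |ξ₁| ≤ 2 * N →
        N / 2 ≤ |ξ - ξ₁| → |ξ - ξ₁| ≤ 2 * N →
        1 / 2 ≤ |ξ| → |ξ| ≤ 2 →
        -(Real.sin (ξ * sigmaK ξ * (t - s)) * Real.sin (ξ₁ * sigmaK ξ₁ * s)) *
            Real.cos ((ξ - ξ₁) * sigmaK (ξ - ξ₁) * s)
          + (1 / 2) * Real.cos (ξ * sigmaK ξ * (t - s)) *
              Real.cos (ξ₁ * sigmaK ξ₁ * s) *
              Real.cos ((ξ - ξ₁) * sigmaK (ξ - ξ₁) * s)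
          ≥ 1 / 32 := by
  refine ⟨1, fun N hN s t hs hst ht ξ ξ₁ _ hξ₁ _ hξξ₁ _ hξ => ?_⟩
  have hs' : s ≤ 1 / (100 * N ^ 3) := hst.trans ht
  have hts : t - s ≤ 1 / (100 * N ^ 3) := by linarith
  exact trig_combination_ge
    (abs_mul_sigmaK_mul_le hN (by linarith) (by linarith) hts)
    (abs_mul_sigmaK_mul_le hN hξ₁ hs hs')
    (abs_mul_sigmaK_mul_le hN hξξ₁ hs hs')
end

section
/- Fix s ∈ ℝ and N ≥ 2, and let û₀(ξ) = N^{−s}·χ_{A_N}(ξ) with A_N = {ξ ∈ ℝ : N − 1/2 ≤ |ξ| ≤ N + 1/2}. Then for every ξ with |ξ| ≤ 1/2, the convolution satisfies (û₀ ∗ û₀)(ξ) = ∫_ℝ û₀(ξ₁) û₀(ξ − ξ₁) dξ₁ ≥ c · N^{−2s} for some absolute constant c > 0 independent of N and ξ. -/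
/- For |ξ| ≤ 1/2 the product û₀(ξ₁) û₀(ξ - ξ₁) equals N^{-2s} on the whole interval of length 1/2
centred at ξ/2 - N: there ξ₁ ≈ -N and ξ - ξ₁ ≈ N both lie in A_N, on opposite sides of the origin.
Since the integrand is a nonnegative constant times an indicator, the integral is at least
N^{-2s}/2. -/

noncomputable def uhat (s N ξ : ℝ) : ℝ :=
  N ^ (-s) * Set.indicator {ξ : ℝ | N - 1/2 ≤ |ξ| ∧ |ξ| ≤ N + 1/2} (fun _ => (1:ℝ)) ξ

open MeasureTheory Set

def shell (N : ℝ) : Set ℝ := {ξ : ℝ | N - 1/2 ≤ |ξ| ∧ |ξ| ≤ N + 1/2}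

lemma measurableSet_shell (N : ℝ) : MeasurableSet (shell N) :=
  (measurableSet_le measurable_const measurable_abs).inter
    (measurableSet_le measurable_abs measurable_const)

lemma shell_subset_Icc (N : ℝ) : shell N ⊆ Icc (-(N + 1/2)) (N + 1/2) :=
  fun _ hξ => abs_le.mp hξ.2

lemma uhat_eq_indicator (s N : ℝ) : uhat s N = (shell N).indicator (fun _ => N ^ (-s)) := by
  ext ξ
  simp only [uhat, shell, indicator_apply, mul_ite, mul_one, mul_zero]

lemma uhat_mul_uhat_sub (s N ξ x : ℝ) :
    uhat s N x * uhat s N (ξ - x)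
      = (shell N ∩ (ξ - ·) ⁻¹' shell N).indicator (fun _ => N ^ (-s) * N ^ (-s)) x := by
  rw [inter_indicator_mul, uhat_eq_indicator]
  rfl

lemma Icc_subset_shell_inter_preimage {N ξ : ℝ} (hN : 1/2 ≤ N) (hξ : |ξ| ≤ 1/2) :
    Icc (ξ/2 - N - 1/4) (ξ/2 - N + 1/4) ⊆ shell N ∩ (ξ - ·) ⁻¹' shell N := by
  obtain ⟨hξl, hξu⟩ := abs_le.mp hξ
  rintro x ⟨hxl, hxu⟩
  have hx : |x| = -x := abs_of_nonpos (by linarith)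
  have hξx : |ξ - x| = ξ - x := abs_of_nonneg (by linarith)
  exact ⟨⟨by linarith, by linarith⟩, ⟨by simp only [hξx]; linarith, by simp only [hξx]; linarith⟩⟩

lemma mul_sub_le_integral_indicator_const {S : Set ℝ} (hS : MeasurableSet S)
    (hS_fin : volume S ≠ ⊤) {a b c : ℝ} (hab : a ≤ b) (hc : 0 ≤ c) (hsub : Icc a b ⊆ S) :
    c * (b - a) ≤ ∫ x, S.indicator (fun _ => c) x := by
  rw [integral_indicator_const c hS, smul_eq_mul, mul_comm c, ← Real.volume_real_Icc_of_le hab]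
  exact mul_le_mul_of_nonneg_right (measureReal_mono hsub hS_fin) hc

theorem stmt_5 (s : ℝ) :
    ∃ c > (0:ℝ), ∀ N : ℝ, 2 ≤ N → ∀ ξ : ℝ, |ξ| ≤ 1/2 →
      c * N ^ (-2 * s) ≤ ∫ ξ₁ : ℝ, uhat s N ξ₁ * uhat s N (ξ - ξ₁) := by
  refine ⟨1/2, by norm_num, fun N hN ξ hξ => ?_⟩
  have hpow : N ^ (-2 * s) = N ^ (-s) * N ^ (-s) := by
    rw [← Real.rpow_add (by linarith)]; ring_nf
  have hS_fin : volume (shell N ∩ (ξ - ·) ⁻¹' shell N) ≠ ⊤ :=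
    ne_top_of_le_ne_top (by simp) (measure_mono (inter_subset_left.trans (shell_subset_Icc N)))
  have hS : MeasurableSet (shell N ∩ (ξ - ·) ⁻¹' shell N) :=
    (measurableSet_shell N).inter ((measurableSet_shell N).preimage (measurable_const.sub measurable_id))
  have key := mul_sub_le_integral_indicator_const hS hS_fin (by linarith) (c := N ^ (-s) * N ^ (-s)) (by positivity)
    (Icc_subset_shell_inter_preimage (by linarith) hξ)
  simp_rw [uhat_mul_uhat_sub, hpow]
  linarith
end

section
/- With A(ξ), ϱ, and the generic regime as above, define ς(r) = ((1 − a r²)(1 + d r²)/((1 − c r²)(1 + b r²)))^{1/2} and the 3×3 matrix P(ξ) with columns: first column (0, −ξ₂/|ξ|, ξ₁/|ξ|)ᵀ, second column (ς(|ξ|), ξ₁/|ξ|, ξ₂/|ξ|)ᵀ, third column (−ς(|ξ|), ξ₁/|ξ|, ξ₂/|ξ|)ᵀ. Then P(ξ) is invertible and P(ξ)^{−1} A(ξ) P(ξ) = diag(0, ϱ(|ξ|), −ϱ(|ξ|)). -/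
/-!
With `ω_ab = (1 - a r²)/(1 + b r²)` and `ω_cd = (1 - c r²)/(1 + d r²)` one has `ϱ = √(ω_ab ω_cd)` and
`ς = √(ω_ab / ω_cd)`. For `a, c ≤ 0 ≤ b, d` both `ω` are positive, so `ς ϱ = ω_ab` and `ω_cd ς = ϱ`.
These two identities and `|ξ / |ξ|| = 1` say that the columns of `P` are eigenvectors of `A` for
`0, ϱ, -ϱ`, and `det P = 2ς > 0`.
-/

noncomputable def nrm2 (ξ : ℝ × ℝ) : ℝ := Real.sqrt (ξ.1 ^ 2 + ξ.2 ^ 2)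

noncomputable def omegaA (a b r : ℝ) : ℝ := (1 - a * r ^ 2) / (1 + b * r ^ 2)

noncomputable def varrho (a b c d r : ℝ) : ℝ :=
  Real.sqrt ((1 - a * r ^ 2) * (1 - c * r ^ 2) / ((1 + b * r ^ 2) * (1 + d * r ^ 2)))

noncomputable def varsigma (a b c d r : ℝ) : ℝ :=
  Real.sqrt ((1 - a * r ^ 2) * (1 + d * r ^ 2) / ((1 - c * r ^ 2) * (1 + b * r ^ 2)))

noncomputable def Amat (a b c d : ℝ) (ξ : ℝ × ℝ) : Matrix (Fin 3) (Fin 3) ℝ :=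
  !![0, (ξ.1 / nrm2 ξ) * omegaA a b (nrm2 ξ), (ξ.2 / nrm2 ξ) * omegaA a b (nrm2 ξ);
     (ξ.1 / nrm2 ξ) * omegaA c d (nrm2 ξ), 0, 0;
     (ξ.2 / nrm2 ξ) * omegaA c d (nrm2 ξ), 0, 0]

noncomputable def Pmat (a b c d : ℝ) (ξ : ℝ × ℝ) : Matrix (Fin 3) (Fin 3) ℝ :=
  !![0, varsigma a b c d (nrm2 ξ), -varsigma a b c d (nrm2 ξ);
     -ξ.2 / nrm2 ξ, ξ.1 / nrm2 ξ, ξ.1 / nrm2 ξ;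
     ξ.1 / nrm2 ξ, ξ.2 / nrm2 ξ, ξ.2 / nrm2 ξ]

namespace Real

lemma sqrt_div_mul_sqrt_mul {x y : ℝ} (hx : 0 ≤ x) (hy : 0 < y) : √(x / y) * √(x * y) = x := by
  rw [← sqrt_mul (div_nonneg hx hy.le), show x / y * (x * y) = x ^ 2 by field_simp, sqrt_sq hx]

lemma mul_sqrt_div {x y : ℝ} (hy : 0 < y) : y * √(x / y) = √(x * y) := by
  rw [← sqrt_sq hy.le, ← sqrt_mul (sq_nonneg y), sqrt_sq hy.le]
  congr 1
  field_simp

end Real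

section Symbols

variable {a b c d : ℝ}

lemma omegaA_pos (ha : a ≤ 0) (hb : 0 ≤ b) (r : ℝ) : 0 < omegaA a b r :=
  div_pos (by nlinarith [sq_nonneg r]) (by nlinarith [sq_nonneg r])

lemma varrho_eq_sqrt_omegaA_mul (r : ℝ) :
    varrho a b c d r = √(omegaA a b r * omegaA c d r) := by
  rw [varrho, omegaA, omegaA, div_mul_div_comm]

lemma varsigma_eq_sqrt_omegaA_div (r : ℝ) :
    varsigma a b c d r = √(omegaA a b r / omegaA c d r) := by
  rw [varsigma, omegaA, omegaA, div_div_div_eq, mul_comm (1 + b * r ^ 2)]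

lemma varsigma_pos (ha : a ≤ 0) (hc : c ≤ 0) (hb : 0 ≤ b) (hd : 0 ≤ d) (r : ℝ) :
    0 < varsigma a b c d r := by
  rw [varsigma_eq_sqrt_omegaA_div]
  exact Real.sqrt_pos.mpr (div_pos (omegaA_pos ha hb r) (omegaA_pos hc hd r))

lemma varsigma_mul_varrho (ha : a ≤ 0) (hc : c ≤ 0) (hb : 0 ≤ b) (hd : 0 ≤ d) (r : ℝ) :
    varsigma a b c d r * varrho a b c d r = omegaA a b r := by
  rw [varsigma_eq_sqrt_omegaA_div, varrho_eq_sqrt_omegaA_mul]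
  exact Real.sqrt_div_mul_sqrt_mul (omegaA_pos ha hb r).le (omegaA_pos hc hd r)

lemma omegaA_mul_varsigma (hc : c ≤ 0) (hd : 0 ≤ d) (r : ℝ) :
    omegaA c d r * varsigma a b c d r = varrho a b c d r := by
  rw [varsigma_eq_sqrt_omegaA_div, varrho_eq_sqrt_omegaA_mul]
  exact Real.mul_sqrt_div (omegaA_pos hc hd r)

end Symbols

lemma nrm2_pos {ξ : ℝ × ℝ} (hξ : ξ ≠ 0) : 0 < nrm2 ξ := by
  refine Real.sqrt_pos.mpr ?_
  rcases ξ with ⟨x, y⟩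
  by_cases hx : x = 0
  · have hy : y ≠ 0 := by simpa [hx] using hξ
    positivity
  · positivity

lemma div_nrm2_sq_add_div_nrm2_sq {ξ : ℝ × ℝ} (hξ : ξ ≠ 0) :
    (ξ.1 / nrm2 ξ) ^ 2 + (ξ.2 / nrm2 ξ) ^ 2 = 1 := by
  have hr := nrm2_pos hξ
  have hr2 : nrm2 ξ ^ 2 = ξ.1 ^ 2 + ξ.2 ^ 2 := Real.sq_sqrt (by positivity)
  field_simp
  exact hr2.symm

lemma det_Pmat (a b c d : ℝ) {ξ : ℝ × ℝ} (hξ : ξ ≠ 0) :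
    (Pmat a b c d ξ).det = 2 * varsigma a b c d (nrm2 ξ) := by
  have hu := div_nrm2_sq_add_div_nrm2_sq hξ
  simp only [Pmat, Matrix.det_fin_three, Matrix.of_apply, Matrix.cons_val', Matrix.cons_val_zero,
    Matrix.cons_val_one, Matrix.cons_val_two, Matrix.empty_val', Matrix.cons_val_fin_one,
    Matrix.tail_cons, Matrix.vecHead, neg_div]
  linear_combination 2 * varsigma a b c d (nrm2 ξ) * hu

lemma Amat_mul_Pmat {a b c d : ℝ} (ha : a ≤ 0) (hc : c ≤ 0) (hb : 0 ≤ b) (hd : 0 ≤ d)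
    {ξ : ℝ × ℝ} (hξ : ξ ≠ 0) :
    Amat a b c d ξ * Pmat a b c d ξ =
      Pmat a b c d ξ * Matrix.diagonal ![0, varrho a b c d (nrm2 ξ), -varrho a b c d (nrm2 ξ)] := by
  have hu := div_nrm2_sq_add_div_nrm2_sq hξ
  have hςϱ := varsigma_mul_varrho ha hc hb hd (nrm2 ξ)
  have hως := omegaA_mul_varsigma (a := a) (b := b) hc hd (nrm2 ξ)
  rw [Amat, Pmat, Matrix.diagonal_vec3, Matrix.mul_fin_three, Matrix.mul_fin_three]
  refine congrArg Matrix.of (Matrix.vec3_eq (Matrix.vec3_eq ?_ ?_ ?_) (Matrix.vec3_eq ?_ ?_ ?_)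
    (Matrix.vec3_eq ?_ ?_ ?_))
  · ring
  · linear_combination omegaA a b (nrm2 ξ) * hu - hςϱ
  · linear_combination omegaA a b (nrm2 ξ) * hu - hςϱ
  · ring
  · linear_combination ξ.1 / nrm2 ξ * hως
  · linear_combination -(ξ.1 / nrm2 ξ) * hως
  · ring
  · linear_combination ξ.2 / nrm2 ξ * hως
  · linear_combination -(ξ.2 / nrm2 ξ) * hως

theorem stmt_7 (a b c d : ℝ) (ha : a < 0) (hc : c < 0) (hb : 0 < b) (hd : 0 < d)
    (ξ : ℝ × ℝ) (hξ : ξ ≠ 0) :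
    IsUnit (Pmat a b c d ξ) ∧
      (Pmat a b c d ξ)⁻¹ * Amat a b c d ξ * Pmat a b c d ξ =
        Matrix.diagonal ![0, varrho a b c d (nrm2 ξ), -varrho a b c d (nrm2 ξ)] := by
  have hdet : IsUnit (Pmat a b c d ξ).det := by
    rw [det_Pmat a b c d hξ]
    exact (mul_pos two_pos (varsigma_pos ha.le hc.le hb.le hd.le _)).ne'.isUnit
  refine ⟨(Matrix.isUnit_iff_isUnit_det _).mpr hdet, ?_⟩
  rw [Matrix.mul_assoc, Amat_mul_Pmat ha.le hc.le hb.le hd.le hξ,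
    Matrix.nonsing_inv_mul_cancel_left _ _ hdet]
end

section
/- Let ϱ_B(r) = (1 + r²/6)^{−1}. There exists N₀ such that for all N ≥ N₀, with T = 1/1000, for all s, t with 0 ≤ s ≤ t ≤ T and all ξ, κ ∈ ℝ² with N/2 ≤ |κ| ≤ 2N, N/2 ≤ |ξ − κ| ≤ 2N, 1/2 ≤ |ξ| ≤ 2: ((ξ·κ)/(|ξ||κ|))·sin(|ξ|ϱ_B(|ξ|)t)·sin(|ξ−κ|ϱ_B(|ξ−κ|)s)·cos(|κ|ϱ_B(|κ|)s) + (((κ−ξ)·κ)/(|ξ−κ||κ|))·(1/2)·cos(|ξ|ϱ_B(|ξ|)t)·cos(|ξ−κ|ϱ_B(|ξ−κ|)s)·cos(|κ|ϱ_B(|κ|)s) ≥ (1/16)·(((κ−ξ)·κ)/(|ξ−κ||κ|) − 1/2). -/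
def dot2 (u v : ℝ × ℝ) : ℝ := u.1 * v.1 + u.2 * v.2

noncomputable def varrhoB (r : ℝ) : ℝ := (1 + r ^ 2 / 6)⁻¹

lemma nrm2_nonneg (u : ℝ × ℝ) : 0 ≤ nrm2 u := Real.sqrt_nonneg _

lemma nrm2_sq (u : ℝ × ℝ) : nrm2 u ^ 2 = u.1 ^ 2 + u.2 ^ 2 :=
  Real.sq_sqrt (by positivity)

lemma nrm2_sub_comm (u v : ℝ × ℝ) : nrm2 (u - v) = nrm2 (v - u) := by
  simp only [nrm2, Prod.fst_sub, Prod.snd_sub]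
  ring_nf

lemma dot2_self (u : ℝ × ℝ) : dot2 u u = nrm2 u ^ 2 := by
  rw [nrm2_sq, dot2]; ring

lemma abs_dot2_le (u v : ℝ × ℝ) : |dot2 u v| ≤ nrm2 u * nrm2 v := by
  refine abs_le_of_sq_le_sq ?_ (mul_nonneg (nrm2_nonneg u) (nrm2_nonneg v))
  rw [mul_pow, nrm2_sq, nrm2_sq, dot2]
  nlinarith [sq_nonneg (u.1 * v.2 - u.2 * v.1)]

lemma abs_dot2_div_le_one (u v : ℝ × ℝ) : |dot2 u v / (nrm2 u * nrm2 v)| ≤ 1 := by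
  have hpos : 0 ≤ nrm2 u * nrm2 v := mul_nonneg (nrm2_nonneg u) (nrm2_nonneg v)
  rw [abs_div, abs_of_nonneg hpos]
  exact div_le_one_of_le₀ (abs_dot2_le u v) hpos

lemma dot2_sub_nonneg {u v : ℝ × ℝ} (h : nrm2 u ≤ nrm2 v) : 0 ≤ dot2 (v - u) v := by
  have hsub : dot2 (v - u) v = dot2 v v - dot2 u v := by
    simp only [dot2, Prod.fst_sub, Prod.snd_sub]; ring
  have hcs := (le_abs_self _).trans (abs_dot2_le u v)
  rw [hsub, dot2_self]
  nlinarith [mul_le_mul_of_nonneg_right h (nrm2_nonneg v)]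

lemma abs_mul_varrhoB_le (r : ℝ) : |r * varrhoB r| ≤ 3 / 2 := by
  have hden : 0 < 1 + r ^ 2 / 6 := by positivity
  rw [varrhoB, ← div_eq_mul_inv, abs_div, abs_of_pos hden, div_le_iff₀ hden]
  nlinarith [sq_nonneg (|r| - 2), sq_abs r]

lemma half_le_cos_of_abs_le_one {x : ℝ} (hx : |x| ≤ 1) : 1 / 2 ≤ Real.cos x := by
  have := Real.one_sub_sq_div_two_le_cos (x := x)
  nlinarith [sq_abs x, abs_nonneg x]

lemma abs_phase_le {r τ : ℝ} (hτ : |τ| ≤ 1 / 1000) : |r * varrhoB r * τ| ≤ 3 / 2000 := by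
  rw [abs_mul]
  calc |r * varrhoB r| * |τ| ≤ 3 / 2 * (1 / 1000) :=
        mul_le_mul (abs_mul_varrhoB_le r) hτ (abs_nonneg τ) (by norm_num)
    _ = 3 / 2000 := by norm_num

lemma half_le_cos_phase {r τ : ℝ} (hτ : |τ| ≤ 1 / 1000) : 1 / 2 ≤ Real.cos (r * varrhoB r * τ) :=
  half_le_cos_of_abs_le_one ((abs_phase_le hτ).trans (by norm_num))

lemma abs_sin_phase_le {r τ : ℝ} (hτ : |τ| ≤ 1 / 1000) :
    |Real.sin (r * varrhoB r * τ)| ≤ 1 / 32 :=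
  Real.abs_sin_le_abs.trans ((abs_phase_le hτ).trans (by norm_num))

lemma trig_combination_ge_s10 {c X a b p q r : ℝ} (hc : |c| ≤ 1) (ha : |a| ≤ 1 / 32) (hb : |b| ≤ 1)
    (hX : 0 ≤ X) (hp : 1 / 2 ≤ p) (hq : 1 / 2 ≤ q) (hr : 1 / 2 ≤ r) (hr1 : r ≤ 1) :
    c * a * b * r + X * (1 / 2) * p * q * r ≥ 1 / 16 * (X - 1 / 2) := by
  have hfirst : |c * a * b * r| ≤ 1 / 32 := by
    rw [abs_mul, abs_mul, abs_mul, abs_of_nonneg (by linarith : 0 ≤ r)]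
    calc |c| * |a| * |b| * r ≤ 1 * (1 / 32) * 1 * 1 := by gcongr
      _ = 1 / 32 := by norm_num
  have hcos : 1 / 8 ≤ p * q * r := by
    calc (1 : ℝ) / 8 = 1 / 2 * (1 / 2) * (1 / 2) := by norm_num
      _ ≤ p * q * r := by gcongr
  have hsecond : X / 16 ≤ X * (1 / 2) * p * q * r := by
    nlinarith [mul_le_mul_of_nonneg_left hcos hX]
  linarith [neg_abs_le (c * a * b * r)]

theorem stmt_10 :
    ∃ N₀ : ℝ, ∀ N : ℝ, N₀ ≤ N →
      ∀ s t : ℝ, 0 ≤ s → s ≤ t → t ≤ 1/1000 →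
      ∀ ξ κ : ℝ × ℝ,
        N / 2 ≤ nrm2 κ → nrm2 κ ≤ 2 * N →
        N / 2 ≤ nrm2 (ξ - κ) → nrm2 (ξ - κ) ≤ 2 * N →
        1 / 2 ≤ nrm2 ξ → nrm2 ξ ≤ 2 →
        (dot2 ξ κ / (nrm2 ξ * nrm2 κ)) *
            Real.sin (nrm2 ξ * varrhoB (nrm2 ξ) * t) *
            Real.sin (nrm2 (ξ - κ) * varrhoB (nrm2 (ξ - κ)) * s) *
            Real.cos (nrm2 κ * varrhoB (nrm2 κ) * s)
          + (dot2 (κ - ξ) κ / (nrm2 (ξ - κ) * nrm2 κ)) * (1 / 2) *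
              Real.cos (nrm2 ξ * varrhoB (nrm2 ξ) * t) *
              Real.cos (nrm2 (ξ - κ) * varrhoB (nrm2 (ξ - κ)) * s) *
              Real.cos (nrm2 κ * varrhoB (nrm2 κ) * s)
          ≥ (1 / 16) * (dot2 (κ - ξ) κ / (nrm2 (ξ - κ) * nrm2 κ) - 1 / 2) := by
  refine ⟨4, fun N hN s t hs hst ht ξ κ hκ _ _ _ _ hξ => ?_⟩
  have hs' : |s| ≤ 1 / 1000 := abs_le.mpr ⟨by linarith, by linarith⟩
  have ht' : |t| ≤ 1 / 1000 := abs_le.mpr ⟨by linarith, by linarith⟩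
  have hX : 0 ≤ dot2 (κ - ξ) κ / (nrm2 (ξ - κ) * nrm2 κ) :=
    div_nonneg (dot2_sub_nonneg (by linarith)) (mul_nonneg (nrm2_nonneg _) (nrm2_nonneg _))
  exact trig_combination_ge_s10 (abs_dot2_div_le_one ξ κ) (abs_sin_phase_le ht')
    (Real.abs_sin_le_one _) hX (half_le_cos_phase ht') (half_le_cos_phase hs')
    (half_le_cos_phase hs') (Real.cos_le_one _)
end
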